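/- arXiv:1710.06187 — 2 statements merged into one kernel-verified Lean document; each statement's English description precedes it below -/
import Mathlib

section
/- Evaluating a proof given in reverse Polish notation is correct: if a list of labels, interpreted as an RPN program over a stack of expressions (where an assertion label pops its instantiated hypotheses and pushes its instantiated conclusion), terminates with a single expression e on the stack, then e is derivable in the deductive system from the hypotheses pushed as leaves. -/
/-- Expressions built from variables and symbols with fixed arities. -/
inductive Term (Sym : Type) (ar : Sym → ℕ) : Type
  | var : ℕ → Term Sym ar
  | app : (s : Sym) → (Fin (ar s) → Term Sym ar) → Term Sym ar

/-- Apply a substitution homomorphically. -/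
def Term.subst {Sym : Type} {ar : Sym → ℕ} (σ : ℕ → Term Sym ar) :
    Term Sym ar → Term Sym ar
  | .var n => σ n
  | .app s a => .app s (fun i => Term.subst σ (a i))

/-- An assertion (rule schema): a finite list of hypothesis expressions
and a conclusion expression over variables. -/
structure Assertion (Sym : Type) (ar : Sym → ℕ) : Type where
  hyps : List (Term Sym ar)
  concl : Term Sym ar

/-- Derivability from a set `S` of assertions and a set `H` of hypothesis
expressions: the inductive closure under hypotheses and `σ`-instances of
assertions whose `σ`-instantiated hypotheses are all derivable. -/
inductive Deriv {Sym : Type} {ar : Sym → ℕ}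
    (S : Set (Assertion Sym ar)) (H : Set (Term Sym ar)) :
    Term Sym ar → Prop
  | hyp {e} : e ∈ H → Deriv S H e
  | app {A : Assertion Sym ar} {σ : ℕ → Term Sym ar} :
      A ∈ S → (∀ h ∈ A.hyps, Deriv S H (h.subst σ)) →
      Deriv S H (A.concl.subst σ)

/-- A step of an RPN (Metamath-style) proof: either push a hypothesis
expression, or apply an assertion with a substitution. -/
inductive Step (Sym : Type) (ar : Sym → ℕ) : Type
  | hyp : Term Sym ar → Step Sym ar
  | app : Assertion Sym ar → (ℕ → Term Sym ar) → Step Sym ar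

attribute [local instance] Classical.propDecidable

/-- Evaluate one RPN step on a stack of expressions.  A hypothesis step
pushes its expression; an assertion step pops the `σ`-instantiated
hypotheses (in order, topmost first) and pushes the `σ`-instance of the
conclusion.  Returns `none` if the stack does not match. -/
noncomputable def evalStep {Sym : Type} {ar : Sym → ℕ} :
    Step Sym ar → List (Term Sym ar) → Option (List (Term Sym ar))
  | .hyp e, st => some (e :: st)
  | .app A σ, st =>
      let n := A.hyps.length
      if st.take n = (A.hyps.map (Term.subst σ)).reverse then
        some (A.concl.subst σ :: st.drop n)
      else none

/-- Evaluate a list of RPN steps on a stack. -/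
noncomputable def evalProof {Sym : Type} {ar : Sym → ℕ} :
    List (Step Sym ar) → List (Term Sym ar) →
      Option (List (Term Sym ar))
  | [], st => some st
  | s :: p, st => (evalStep s st).bind (evalProof p)

/-! The invariant is that every expression on the stack is derivable: a pushed hypothesis is
derivable outright, and an assertion step only fires when its instantiated hypotheses are on top
of the stack, hence already derivable. -/

namespace Step

variable {Sym : Type} {ar : Sym → ℕ}

def Admissible (S : Set (Assertion Sym ar)) (H : Set (Term Sym ar)) : Step Sym ar → Prop
  | .hyp e => e ∈ H
  | .app A _ => A ∈ S

end Step

section Soundness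

variable {Sym : Type} {ar : Sym → ℕ} {S : Set (Assertion Sym ar)} {H : Set (Term Sym ar)}

theorem evalStep_app_eq_some_iff {A : Assertion Sym ar} {σ : ℕ → Term Sym ar}
    {st st' : List (Term Sym ar)} :
    evalStep (.app A σ) st = some st' ↔
      st.take A.hyps.length = (A.hyps.map (Term.subst σ)).reverse ∧
        st' = A.concl.subst σ :: st.drop A.hyps.length := by
  simp only [evalStep]
  split_ifs with hmatch <;> simp [hmatch, eq_comm]

theorem Deriv.of_evalStep {s : Step Sym ar} {st st' : List (Term Sym ar)}
    (hs : s.Admissible S H) (hst : ∀ x ∈ st, Deriv S H x) (heval : evalStep s st = some st') :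
    ∀ x ∈ st', Deriv S H x := by
  cases s with
  | hyp e =>
    cases heval
    simpa using ⟨Deriv.hyp hs, hst⟩
  | app A σ =>
    obtain ⟨hmatch, rfl⟩ := evalStep_app_eq_some_iff.mp heval
    have hconcl : Deriv S H (A.concl.subst σ) := by
      refine Deriv.app hs fun h hh => hst _ (List.mem_of_mem_take (i := A.hyps.length) ?_)
      simpa [hmatch] using ⟨h, hh, rfl⟩
    simpa using ⟨hconcl, fun x hx => hst x (List.mem_of_mem_drop hx)⟩

theorem Deriv.of_evalProof {p : List (Step Sym ar)} {st st' : List (Term Sym ar)}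
    (hp : ∀ s ∈ p, s.Admissible S H) (hst : ∀ x ∈ st, Deriv S H x)
    (heval : evalProof p st = some st') :
    ∀ x ∈ st', Deriv S H x := by
  induction p generalizing st with
  | nil =>
    cases heval
    exact hst
  | cons s p ih =>
    obtain ⟨mid, hstep, hrest⟩ := Option.bind_eq_some_iff.mp heval
    exact ih (fun t ht => hp t (List.mem_cons_of_mem s ht))
      (Deriv.of_evalStep (hp s List.mem_cons_self) hst hstep) hrest

end Soundness

/-- Soundness of RPN evaluation: if an RPN proof, all of whose assertion
steps use assertions from `S`, evaluates on the empty stack to a single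
expression `e`, then `e` is derivable in the deductive system `S` from the
hypotheses pushed as leaves. -/
theorem rpn_eval_sound {Sym : Type} {ar : Sym → ℕ}
    (S : Set (Assertion Sym ar)) (p : List (Step Sym ar))
    (hS : ∀ A σ, Step.app A σ ∈ p → A ∈ S)
    (e : Term Sym ar) (h : evalProof p [] = some [e]) :
    Deriv S {x | Step.hyp x ∈ p} e := by
  have hp : ∀ s ∈ p, s.Admissible S {x | Step.hyp x ∈ p} := by
    rintro (x | ⟨A, σ⟩) hs
    exacts [hs, hS A σ hs]
  exact Deriv.of_evalProof hp (by simp) h e (List.mem_singleton_self e)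
end

section
/- Conversely, every expression derivable in a Post-style deductive system has an RPN proof: there exists a list of steps whose evaluation on the empty stack terminates with exactly that expression. -/
attribute [local instance] Classical.propDecidable

theorem evalProof_append {Sym : Type} {ar : Sym → ℕ}
    (p q : List (Step Sym ar)) (st : List (Term Sym ar)) :
    evalProof (p ++ q) st = (evalProof p st).bind (evalProof q) := by
  induction p generalizing st with
  | nil => simp [evalProof]
  | cons s p ih =>
      simp only [List.cons_append, evalProof]
      cases evalStep s st with
      | none => rfl
      | some st' => simp [ih]

theorem rpn_aux {Sym : Type} {ar : Sym → ℕ}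
    (S : Set (Assertion Sym ar)) (H : Set (Term Sym ar))
    (e : Term Sym ar) (h : Deriv S H e) :
    ∀ st : List (Term Sym ar), ∃ p : List (Step Sym ar),
      (∀ x, Step.hyp x ∈ p → x ∈ H) ∧
      (∀ A σ, Step.app A σ ∈ p → A ∈ S) ∧
      evalProof p st = some (e :: st) := by
  induction h with
  | @hyp e' hm =>
      intro st
      refine ⟨[.hyp e'], ?_, ?_, by simp [evalProof, evalStep]⟩
      · intro x hx; simp at hx; subst hx; exact hm
      · intro A σ hx; simp at hx
  | @app A σ hA hhyps ih =>
      -- first: get a proof pushing all instantiated hyps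
      have key : ∀ (l : List (Term Sym ar)), (∀ x ∈ l, x ∈ A.hyps) →
          ∀ st, ∃ p : List (Step Sym ar),
            (∀ x, Step.hyp x ∈ p → x ∈ H) ∧
            (∀ B σ', Step.app B σ' ∈ p → B ∈ S) ∧
            evalProof p st = some ((l.map (Term.subst σ)).reverse ++ st) := by
        intro l hl
        induction l with
        | nil => intro st; exact ⟨[], by simp, by simp, by simp [evalProof]⟩
        | cons a l ihl =>
            intro st
            obtain ⟨p1, h1, h2, h3⟩ := ih a (hl a (by simp)) st
            obtain ⟨p2, g1, g2, g3⟩ := ihl (fun x hx => hl x (by simp [hx]))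
              (a.subst σ :: st)
            refine ⟨p1 ++ p2, ?_, ?_, ?_⟩
            · intro x hx; rcases List.mem_append.1 hx with hx | hx
              exacts [h1 x hx, g1 x hx]
            · intro B σ' hx; rcases List.mem_append.1 hx with hx | hx
              exacts [h2 B σ' hx, g2 B σ' hx]
            · rw [evalProof_append, h3, Option.bind_some, g3]
              simp
      intro st
      obtain ⟨p, h1, h2, h3⟩ := key A.hyps (fun _ h => h) st
      refine ⟨p ++ [.app A σ], ?_, ?_, ?_⟩
      · intro x hx
        rcases List.mem_append.1 hx with hx | hx
        · exact h1 x hx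
        · simp at hx
      · intro B σ' hx
        rcases List.mem_append.1 hx with hx | hx
        · exact h2 B σ' hx
        · simp at hx; rcases hx with ⟨rfl, -⟩; exact hA
      · rw [evalProof_append, h3, Option.bind_some]
        have hn : ((A.hyps.map (Term.subst σ)).reverse).length = A.hyps.length := by
          simp
        simp only [evalProof, evalStep]
        rw [← hn, List.take_left, List.drop_left]
        simp [evalProof]

/-- Completeness of the RPN proof format: every expression derivable from
assertions `S` and hypotheses `H` has an RPN proof, i.e. a list of steps
(hypothesis pushes from `H` and applications of assertions from `S`) whose
evaluation on the empty stack terminates with exactly that expression. -/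
theorem rpn_proof_exists {Sym : Type} {ar : Sym → ℕ}
    (S : Set (Assertion Sym ar)) (H : Set (Term Sym ar))
    (e : Term Sym ar) (h : Deriv S H e) :
    ∃ p : List (Step Sym ar),
      (∀ x, Step.hyp x ∈ p → x ∈ H) ∧
      (∀ A σ, Step.app A σ ∈ p → A ∈ S) ∧
      evalProof p [] = some [e] := by
  obtain ⟨p, h1, h2, h3⟩ := rpn_aux S H e h []
  exact ⟨p, h1, h2, h3⟩
end
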